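/- arXiv:math/0603375 — 2 statements merged into one kernel-verified Lean document; each statement's English description precedes it below -/
import Mathlib

section
/- The deformation U of the graded algebra A is a PBW-deformation (i.e., the canonical surjection Φ: A → gr U is an isomorphism of graded algebras) if and only if the associated central extension D is a regular central extension (i.e., the image of z in D is not a zero divisor). -/
/-!
Write `ε : T[z] → T` for `z ↦ 1` and `I = ⟨h(P)⟩`. Being generated by homogeneous elements, `I`
is graded; `ε` maps `I` onto `⟨P⟩`, and the constant terms of elements of `I` form `⟨R⟩`.

If `z` is regular and `x + y ∈ ⟨P⟩` with `x ∈ T_i`, `deg y < i`, a homogeneous lift of `x + y`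
to `I` of degree `n` is divisible by `z^(n-i)`; the quotient is still in `I` and has constant
term `x`, so `x ∈ ⟨R⟩`.

Conversely, let `U` be PBW and `z^k w ∈ I` with `w` homogeneous of degree `n`. The top
component `w₀` of `ε w ∈ ⟨P⟩` lies in `⟨R⟩`; lifting it to `v ∈ I` with constant term `w₀`
gives `w - v = z u` with `u` of degree `n - 1` and `z^(k+1) u ∈ I`, and induction on `n`
concludes. In degree `0` the PBW property rules out nonzero scalars in `⟨P⟩`.
-/

open Polynomial

noncomputable section

namespace PBWPaper

variable (K : Type*) [Field K] (s : ℕ)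

/-- The free associative algebra `T = K⟨x_1,…,x_s⟩`. -/
abbrev T := FreeAlgebra K (Fin s)

/-- `V`: the span of the generators (the degree-one part of `T`). -/
def V : Submodule K (T K s) :=
  Submodule.span K (Set.range (FreeAlgebra.ι K : Fin s → T K s))

/-- `T_i`: the span of the words of length `i`. -/
def Tgrade (i : ℕ) : Submodule K (T K s) := V K s ^ i

/-- `F^kT = ⊕_{i ≤ k} T_i`, the standard filtration of `T`. -/
def Ffilt (k : ℕ) : Submodule K (T K s) := ⨆ i ≤ k, Tgrade K s i

/-- An element of `T[z]` (with `deg z = 1`, total grading) is homogeneous of degree `n`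
iff its `z^j`-coefficient lies in `T_{n-j}` for `j ≤ n` and vanishes for `j > n`. -/
def homogZ (n : ℕ) (w : Polynomial (T K s)) : Prop :=
  (∀ j ≤ n, w.coeff j ∈ Tgrade K s (n - j)) ∧ ∀ j, n < j → w.coeff j = 0

/-- The nested subspaces `P_k` of `T`:  `P_1 = span(P ∩ F^1 T)` and
`P_k = V·P_{k-1} + P_{k-1}·V + span(P ∩ F^k T)` for `k > 1`. -/
def Pk (Pset : Set (T K s)) : ℕ → Submodule K (T K s)
  | 0 => ⊥
  | k + 1 => V K s * Pk Pset k + Pk Pset k * V K s +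
      Submodule.span K (Pset ∩ (Ffilt K s (k + 1) : Set (T K s)))


variable {m : ℕ}

/-- The set of relations `P = {r_1+l_1, …, r_m+l_m}` of the deformation `U = T/⟨P⟩`. -/
def PsetOf (r l : Fin m → T K s) : Set (T K s) := Set.range fun i => r i + l i

/-- The homogenization `h(r_i+l_i) = r_i + Σ_{j<d_i} z^{d_i-j} l_{i,j} ∈ T[z]`,
where `l_i = Σ_{j<d_i} l_{i,j}` is the decomposition of `l_i` into homogeneous components. -/
def hRel (d : Fin m → ℕ) (r : Fin m → T K s) (lc : Fin m → ℕ → T K s) (i : Fin m) :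
    Polynomial (T K s) :=
  Polynomial.C (r i) + ∑ j ∈ Finset.range (d i), Polynomial.monomial (d i - j) (lc i j)

/-- The set of relations `h(P)` of the central extension `D = T[z]/⟨h(P)⟩`. -/
def hPset (d : Fin m → ℕ) (r : Fin m → T K s) (lc : Fin m → ℕ → T K s) :
    Set (Polynomial (T K s)) := Set.range (hRel K s d r lc)

section SpanInduction

variable {R S : Type*} [Ring R] [Ring S]

theorem span_induction_of_closure_eq_top {H : Set R} (hH : AddSubmonoid.closure H = ⊤)
    (hneg : ∀ a ∈ H, -a ∈ H) {G : Set R} {p : R → Prop} (zero : p 0)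
    (add : ∀ x y, p x → p y → p (x + y)) (gen : ∀ a ∈ H, ∀ g ∈ G, ∀ b ∈ H, p (a * g * b))
    {x : R} (hx : x ∈ TwoSidedIdeal.span G) : p x := by
  -- `p` need not be closed under negation, so `p (-x)` is carried along: `-(a g b) = (-a) g b`.
  have add' : ∀ x y, p x ∧ p (-x) → p y ∧ p (-y) → p (x + y) ∧ p (-(x + y)) :=
    fun x y hx hy => by rw [neg_add]; exact ⟨add _ _ hx.1 hy.1, add _ _ hx.2 hy.2⟩
  have zero' : p 0 ∧ p (-0) := by simpa using zero
  have hgen : ∀ a g b, g ∈ G → p (a * g * b) ∧ p (-(a * g * b)) := by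
    intro a g b hg
    have ha : a ∈ AddSubmonoid.closure H := hH ▸ trivial
    have hb : b ∈ AddSubmonoid.closure H := hH ▸ trivial
    induction ha using AddSubmonoid.closure_induction with
    | mem a ha =>
      induction hb using AddSubmonoid.closure_induction with
      | mem b hb =>
        refine ⟨gen a ha g hg b hb, ?_⟩
        simpa only [neg_mul] using gen (-a) (hneg a ha) g hg b hb
      | zero => simpa only [mul_zero] using zero'
      | add b b' _ _ hb hb' => simpa only [mul_add] using add' _ _ hb hb'
    | zero => simpa only [mul_zero, zero_mul] using zero'
    | add a a' _ _ ha ha' => simpa only [add_mul] using add' _ _ ha ha'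
  rw [TwoSidedIdeal.mem_span_iff_mem_addSubgroup_closure] at hx
  suffices p x ∧ p (-x) from this.1
  induction hx using AddSubgroup.closure_induction with
  | mem x hx =>
    obtain ⟨-, ⟨a, -, g, hg, rfl⟩, b, -, rfl⟩ := hx
    exact hgen a g b hg
  | zero => exact zero'
  | add x y _ _ hx hy => exact add' x y hx hy
  | neg x _ hx => rw [neg_neg]; exact hx.symm

variable {ι : Type*} {h : ι → S} {g : ι → R}

theorem map_mem_span_range (f : S →+* R) (hfg : ∀ i, f (h i) = g i) {w : S}
    (hw : w ∈ TwoSidedIdeal.span (Set.range h)) : f w ∈ TwoSidedIdeal.span (Set.range g) := by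
  refine (TwoSidedIdeal.mem_comap f).mp
    (TwoSidedIdeal.mem_span_iff.mp hw (TwoSidedIdeal.comap f _) ?_)
  rintro _ ⟨i, rfl⟩
  exact (TwoSidedIdeal.mem_comap f).mpr (hfg i ▸ TwoSidedIdeal.subset_span ⟨i, rfl⟩)

theorem exists_mem_span_range_map_eq {f : S →+* R} (hf : Function.Surjective f)
    (hfg : ∀ i, f (h i) = g i) {t : R} (ht : t ∈ TwoSidedIdeal.span (Set.range g)) :
    ∃ w ∈ TwoSidedIdeal.span (Set.range h), f w = t := by
  induction ht using TwoSidedIdeal.span_induction with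
  | mem x hx =>
    obtain ⟨i, rfl⟩ := hx
    exact ⟨h i, TwoSidedIdeal.subset_span ⟨i, rfl⟩, hfg i⟩
  | zero => exact ⟨0, TwoSidedIdeal.zero_mem _, map_zero f⟩
  | add x y _ _ hx hy =>
    obtain ⟨w, hw, rfl⟩ := hx
    obtain ⟨v, hv, rfl⟩ := hy
    exact ⟨w + v, TwoSidedIdeal.add_mem _ hw hv, map_add f w v⟩
  | neg x _ hx =>
    obtain ⟨w, hw, rfl⟩ := hx
    exact ⟨-w, TwoSidedIdeal.neg_mem _ hw, map_neg f w⟩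
  | left_absorb a x _ hx =>
    obtain ⟨w, hw, rfl⟩ := hx
    obtain ⟨a, rfl⟩ := hf a
    exact ⟨a * w, TwoSidedIdeal.mul_mem_left _ _ _ hw, map_mul f a w⟩
  | right_absorb b x _ hx =>
    obtain ⟨w, hw, rfl⟩ := hx
    obtain ⟨b, rfl⟩ := hf b
    exact ⟨w * b, TwoSidedIdeal.mul_mem_right _ _ _ hw, map_mul f w b⟩

end SpanInduction

section Dehomogenize

variable {R : Type*} [Ring R]

def dehomogenize : R[X] →+* R :=
  eval₂RingHom' (RingHom.id R) 1 fun a => Commute.one_right a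

@[simp] lemma dehomogenize_monomial (n : ℕ) (a : R) : dehomogenize (monomial n a) = a := by
  simp [dehomogenize]

@[simp] lemma dehomogenize_C (a : R) : dehomogenize (C a) = a := by
  simp [dehomogenize]

@[simp] lemma dehomogenize_X : dehomogenize (X : R[X]) = 1 := by
  simp [dehomogenize]

lemma dehomogenize_surjective : Function.Surjective (dehomogenize : R[X] → R) :=
  fun a => ⟨C a, dehomogenize_C a⟩

lemma dehomogenize_eq_sum_range_coeff {p : R[X]} {N : ℕ} (h : p.natDegree < N) :
    dehomogenize p = ∑ k ∈ Finset.range N, p.coeff k := by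
  conv_lhs => rw [p.as_sum_range' N h]
  simp only [map_sum, dehomogenize_monomial]

end Dehomogenize

section GradingT

variable {K : Type*} [Field K] {s : ℕ}

/-- Sends `u ∈ T_l` to `z^l u`, so the coefficients of `gradeMap u` are the homogeneous
components of `u`. -/
def gradeMap : T K s →ₐ[K] (T K s)[X] :=
  FreeAlgebra.lift K fun x => monomial 1 (FreeAlgebra.ι K x)

@[simp] lemma gradeMap_ι (x : Fin s) :
    gradeMap (FreeAlgebra.ι K x) = monomial 1 (FreeAlgebra.ι K x) := by
  simp [gradeMap]

lemma gradeMap_of_mem {l : ℕ} {u : T K s} (hu : u ∈ Tgrade K s l) :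
    gradeMap u = monomial l u := by
  induction l generalizing u with
  | zero =>
    obtain ⟨c, rfl⟩ := Submodule.mem_one.mp hu
    rw [monomial_zero_left, AlgHom.commutes, Polynomial.algebraMap_apply]
  | succ l ih =>
    rw [Tgrade, pow_succ] at hu
    refine Submodule.mul_induction_on hu (fun a ha b hb => ?_) fun x y hx hy => ?_
    · have hb : gradeMap b = monomial 1 b := by
        induction hb using Submodule.span_induction with
        | mem v hv => obtain ⟨x, rfl⟩ := hv; exact gradeMap_ι x
        | zero => simp
        | add x y _ _ hx hy => rw [map_add, hx, hy, map_add]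
        | smul c x _ hx => rw [map_smul, hx, smul_monomial]
      rw [map_mul, ih ha, hb, monomial_mul_monomial]
    · rw [map_add, hx, hy, map_add]

lemma dehomogenize_gradeMap (u : T K s) : dehomogenize (gradeMap u) = u := by
  induction u using FreeAlgebra.induction with
  | grade0 c => rw [AlgHom.commutes, Polynomial.algebraMap_apply]; exact dehomogenize_C _
  | grade1 x => simp
  | mul a b ha hb => rw [map_mul, map_mul, ha, hb]
  | add a b ha hb => rw [map_add, map_add, ha, hb]

lemma Tgrade_mul_mem {i j : ℕ} {u v : T K s} (hu : u ∈ Tgrade K s i)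
    (hv : v ∈ Tgrade K s j) : u * v ∈ Tgrade K s (i + j) := by
  rw [Tgrade, pow_add]
  exact Submodule.mul_mem_mul hu hv

lemma Tgrade_le_Ffilt {i k : ℕ} (h : i ≤ k) : Tgrade K s i ≤ Ffilt K s k :=
  le_iSup₂_of_le i h le_rfl

def proj (k : ℕ) : T K s →ₗ[K] T K s where
  toFun u := (gradeMap u).coeff k
  map_add' a b := by simp
  map_smul' c a := by simp

lemma proj_apply (k : ℕ) (u : T K s) : proj k u = (gradeMap u).coeff k := rfl

lemma proj_mem (k : ℕ) (u : T K s) : proj k u ∈ Tgrade K s k := by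
  induction u using FreeAlgebra.induction generalizing k with
  | grade0 c =>
    rw [proj_apply, AlgHom.commutes, Polynomial.algebraMap_apply, coeff_C]
    split_ifs with hk
    · exact hk ▸ Submodule.mem_one.mpr ⟨c, rfl⟩
    · exact zero_mem _
  | grade1 x =>
    rw [proj_apply, gradeMap_ι, coeff_monomial]
    split_ifs with hk
    · rw [← hk, Tgrade, pow_one]
      exact Submodule.subset_span ⟨x, rfl⟩
    · exact zero_mem _
  | mul a b ha hb =>
    rw [proj_apply, map_mul, coeff_mul]
    refine Submodule.sum_mem _ fun p hp => ?_
    rw [← Finset.HasAntidiagonal.mem_antidiagonal.mp hp]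
    exact Tgrade_mul_mem (ha p.1) (hb p.2)
  | add a b ha hb => rw [map_add]; exact add_mem (ha k) (hb k)

lemma proj_of_mem {l k : ℕ} {u : T K s} (hu : u ∈ Tgrade K s l) :
    proj k u = if l = k then u else 0 := by
  rw [proj_apply, gradeMap_of_mem hu, coeff_monomial]

lemma proj_of_mem_self {k : ℕ} {u : T K s} (hu : u ∈ Tgrade K s k) : proj k u = u := by
  rw [proj_of_mem hu, if_pos rfl]

lemma proj_of_mem_of_ne {l k : ℕ} {u : T K s} (hu : u ∈ Tgrade K s l) (h : l ≠ k) :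
    proj k u = 0 := by
  rw [proj_of_mem hu, if_neg h]

lemma proj_eq_zero_of_mem_Ffilt {k n : ℕ} {u : T K s} (hu : u ∈ Ffilt K s k) (h : k < n) :
    proj n u = 0 := by
  suffices Ffilt K s k ≤ LinearMap.ker (proj n) from this hu
  exact iSup₂_le fun i hi v hv => proj_of_mem_of_ne hv (by omega)

lemma sum_proj_eq {u : T K s} {N : ℕ} (h : (gradeMap u).natDegree < N) :
    ∑ k ∈ Finset.range N, proj k u = u := by
  simp only [proj_apply, ← dehomogenize_eq_sum_range_coeff h, dehomogenize_gradeMap]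

lemma exists_sum_proj_eq (u : T K s) : ∃ N, ∑ k ∈ Finset.range N, proj k u = u :=
  ⟨_, sum_proj_eq (Nat.lt_succ_self _)⟩

lemma closure_Tgrade_eq_top :
    AddSubmonoid.closure (⋃ i, (Tgrade K s i : Set (T K s))) = ⊤ := by
  refine eq_top_iff.mpr fun u _ => ?_
  obtain ⟨N, hN⟩ := exists_sum_proj_eq u
  rw [← hN]
  exact AddSubmonoid.sum_mem _ fun k _ =>
    AddSubmonoid.subset_closure (Set.mem_iUnion.mpr ⟨k, proj_mem k u⟩)

lemma neg_mem_iUnion_Tgrade {u : T K s} (hu : u ∈ ⋃ i, (Tgrade K s i : Set (T K s))) :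
    -u ∈ ⋃ i, (Tgrade K s i : Set (T K s)) := by
  obtain ⟨i, hi⟩ := Set.mem_iUnion.mp hu
  exact Set.mem_iUnion.mpr ⟨i, neg_mem hi⟩

end GradingT

section GradingTz

variable {K : Type*} [Field K] {s : ℕ}

lemma homogZ_zero (n : ℕ) : homogZ K s n 0 :=
  ⟨fun _ _ => zero_mem _, fun _ _ => coeff_zero _⟩

lemma homogZ_add {n : ℕ} {u v : (T K s)[X]} (hu : homogZ K s n u) (hv : homogZ K s n v) :
    homogZ K s n (u + v) :=
  ⟨fun j hj => by rw [coeff_add]; exact add_mem (hu.1 j hj) (hv.1 j hj),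
    fun j hj => by rw [coeff_add, hu.2 j hj, hv.2 j hj, add_zero]⟩

lemma homogZ_neg {n : ℕ} {u : (T K s)[X]} (hu : homogZ K s n u) : homogZ K s n (-u) :=
  ⟨fun j hj => by rw [coeff_neg]; exact neg_mem (hu.1 j hj),
    fun j hj => by rw [coeff_neg, hu.2 j hj, neg_zero]⟩

lemma homogZ_sub {n : ℕ} {u v : (T K s)[X]} (hu : homogZ K s n u) (hv : homogZ K s n v) :
    homogZ K s n (u - v) := by
  rw [sub_eq_add_neg]
  exact homogZ_add hu (homogZ_neg hv)

lemma homogZ_sum {ι : Type*} {n : ℕ} (S : Finset ι) {f : ι → (T K s)[X]}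
    (hf : ∀ i ∈ S, homogZ K s n (f i)) : homogZ K s n (∑ i ∈ S, f i) :=
  Finset.sum_induction f _ (fun _ _ => homogZ_add) (homogZ_zero n) hf

lemma homogZ_mul {p q : ℕ} {u v : (T K s)[X]} (hu : homogZ K s p u) (hv : homogZ K s q v) :
    homogZ K s (p + q) (u * v) := by
  refine ⟨fun k hk => ?_, fun k hk => ?_⟩ <;> rw [coeff_mul]
  · refine Submodule.sum_mem _ fun ij hij => ?_
    have hij : ij.1 + ij.2 = k := Finset.HasAntidiagonal.mem_antidiagonal.mp hij
    by_cases h1 : ij.1 ≤ p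
    · by_cases h2 : ij.2 ≤ q
      · rw [show p + q - k = p - ij.1 + (q - ij.2) by omega]
        exact Tgrade_mul_mem (hu.1 _ h1) (hv.1 _ h2)
      · rw [hv.2 _ (by omega), mul_zero]
        exact zero_mem _
    · rw [hu.2 _ (by omega), zero_mul]
      exact zero_mem _
  · refine Finset.sum_eq_zero fun ij hij => ?_
    have hij : ij.1 + ij.2 = k := Finset.HasAntidiagonal.mem_antidiagonal.mp hij
    by_cases h1 : ij.1 ≤ p
    · rw [hv.2 _ (by omega), mul_zero]
    · rw [hu.2 _ (by omega), zero_mul]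

lemma homogZ_monomial (t : ℕ) {k : ℕ} {a : T K s} (ha : a ∈ Tgrade K s k) :
    homogZ K s (t + k) (monomial t a) := by
  refine ⟨fun j hj => ?_, fun j hj => by rw [coeff_monomial, if_neg (by omega)]⟩
  rw [coeff_monomial]
  split_ifs with h
  · rwa [← h, Nat.add_sub_cancel_left]
  · exact zero_mem _

lemma homogZ_C {k : ℕ} {a : T K s} (ha : a ∈ Tgrade K s k) : homogZ K s k (C a) := by
  simpa using homogZ_monomial 0 ha

lemma homogZ_X_pow_mul (k : ℕ) {n : ℕ} {u : (T K s)[X]} (hu : homogZ K s n u) :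
    homogZ K s (n + k) (X ^ k * u) := by
  have hX : homogZ K s k (X ^ k) := by
    have h1 : (1 : T K s) ∈ Tgrade K s 0 := by
      rw [Tgrade, pow_zero]
      exact Submodule.mem_one.mpr ⟨1, map_one _⟩
    simpa [X_pow_eq_monomial] using homogZ_monomial k h1
  rw [add_comm]
  exact homogZ_mul hX hu

lemma homogZ_divX {n : ℕ} {w : (T K s)[X]} (hw : homogZ K s (n + 1) w) :
    homogZ K s n w.divX :=
  ⟨fun j hj => by rw [coeff_divX, ← Nat.add_sub_add_right n 1 j]; exact hw.1 (j + 1) (by omega),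
    fun j hj => by rw [coeff_divX]; exact hw.2 (j + 1) (by omega)⟩

lemma natDegree_le_of_homogZ {n : ℕ} {w : (T K s)[X]} (hw : homogZ K s n w) :
    w.natDegree ≤ n :=
  natDegree_le_iff_coeff_eq_zero.mpr fun _ h => hw.2 _ h

lemma eq_C_of_homogZ_zero {w : (T K s)[X]} (hw : homogZ K s 0 w) : w = C (w.coeff 0) :=
  eq_C_of_natDegree_eq_zero (Nat.le_zero.mp (natDegree_le_of_homogZ hw))

lemma dehomogenize_of_homogZ {n : ℕ} {w : (T K s)[X]} (hw : homogZ K s n w) :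
    dehomogenize w = ∑ j ∈ Finset.range (n + 1), w.coeff j :=
  dehomogenize_eq_sum_range_coeff (Nat.lt_succ_of_le (natDegree_le_of_homogZ hw))

lemma proj_dehomogenize_of_homogZ {n k : ℕ} {w : (T K s)[X]} (hw : homogZ K s n w) :
    proj k (dehomogenize w) = if k ≤ n then w.coeff (n - k) else 0 := by
  rw [dehomogenize_of_homogZ hw, map_sum]
  have hproj : ∀ j ∈ Finset.range (n + 1), proj k (w.coeff j) = if n - j = k then w.coeff j else 0 :=
    fun j hj => proj_of_mem (hw.1 j (Finset.mem_range_succ_iff.mp hj))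
  rw [Finset.sum_congr rfl hproj]
  split_ifs with hk
  · rw [Finset.sum_eq_single (n - k) (fun j hj hne => if_neg (by simp at hj; omega))
      (fun h => absurd (Finset.mem_range_succ_iff.mpr (Nat.sub_le n k)) h), if_pos (by omega)]
  · exact Finset.sum_eq_zero fun j hj => if_neg (by simp at hj; omega)

def projZ (n : ℕ) : (T K s)[X] →+ (T K s)[X] where
  toFun w := ∑ j ∈ Finset.range (n + 1), monomial j (proj (n - j) (w.coeff j))
  map_zero' := by simp
  map_add' a b := by simp [Finset.sum_add_distrib]

lemma coeff_projZ (n t : ℕ) (w : (T K s)[X]) :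
    (projZ n w).coeff t = if t ≤ n then proj (n - t) (w.coeff t) else 0 := by
  simp [projZ, finsetSum_coeff, coeff_monomial]

lemma homogZ_projZ (n : ℕ) (w : (T K s)[X]) : homogZ K s n (projZ n w) :=
  ⟨fun j hj => by rw [coeff_projZ, if_pos hj]; exact proj_mem _ _,
    fun j hj => by rw [coeff_projZ, if_neg (by omega)]⟩

lemma projZ_of_homogZ {l n : ℕ} {w : (T K s)[X]} (hw : homogZ K s l w) :
    projZ n w = if l = n then w else 0 := by
  ext t
  rw [coeff_projZ]
  by_cases ht : t ≤ l
  · rw [proj_of_mem (hw.1 t ht)]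
    split_ifs <;> first | rfl | omega
  · rw [hw.2 t (by omega), map_zero, ite_self]
    split_ifs <;> simp [hw.2 t (by omega)]

lemma projZ_X_mul (n : ℕ) (w : (T K s)[X]) : projZ (n + 1) (X * w) = X * projZ n w := by
  ext t
  rcases t with _ | t
  · simp [coeff_projZ]
  · simp only [coeff_projZ, coeff_X_mul, Nat.add_le_add_iff_right, Nat.add_sub_add_right]

lemma exists_sum_projZ_eq (w : (T K s)[X]) : ∃ N, ∑ n ∈ Finset.range N, projZ n w = w := by
  set B := (Finset.range (w.natDegree + 1)).sup fun j => (gradeMap (w.coeff j)).natDegree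
  refine ⟨w.natDegree + B + 2, ?_⟩
  ext t
  rw [finsetSum_coeff]
  simp only [coeff_projZ]
  by_cases ht : t ≤ w.natDegree
  · have hB : (gradeMap (w.coeff t)).natDegree ≤ B :=
      Finset.le_sup (f := fun j => (gradeMap (w.coeff j)).natDegree)
        (Finset.mem_range_succ_iff.mpr ht)
    rw [← Finset.sum_range_add_sum_Ico _ (show t ≤ w.natDegree + B + 2 by omega),
      Finset.sum_eq_zero fun n hn => if_neg (by simp at hn; omega), zero_add,
      Finset.sum_Ico_eq_sum_range]
    simp only [Nat.le_add_right, if_true, Nat.add_sub_cancel_left]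
    exact sum_proj_eq (by omega)
  · simp [coeff_eq_zero_of_natDegree_lt (not_le.mp ht)]

lemma closure_homogZ_eq_top :
    AddSubmonoid.closure {w : (T K s)[X] | ∃ n, homogZ K s n w} = ⊤ := by
  refine eq_top_iff.mpr fun w _ => ?_
  obtain ⟨N, hN⟩ := exists_sum_projZ_eq w
  rw [← hN]
  exact AddSubmonoid.sum_mem _ fun n _ => AddSubmonoid.subset_closure ⟨n, homogZ_projZ n w⟩

end GradingTz

section Presentation

variable {K : Type*} [Field K] {s m : ℕ} {d : Fin m → ℕ} {r l : Fin m → T K s}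
  {lc : Fin m → ℕ → T K s}

lemma constantCoeff_hRel (i : Fin m) : constantCoeff (hRel K s d r lc i) = r i := by
  rw [constantCoeff_apply, hRel, coeff_add, coeff_C_zero, finsetSum_coeff,
    Finset.sum_eq_zero fun j hj => coeff_monomial_of_ne _ (by simp at hj; omega), add_zero]

lemma dehomogenize_hRel (hl : ∀ i, l i = ∑ j ∈ Finset.range (d i), lc i j) (i : Fin m) :
    dehomogenize (hRel K s d r lc i) = r i + l i := by
  simp [hRel, hl]

lemma homogZ_hRel (hr : ∀ i, r i ∈ Tgrade K s (d i)) (hlc : ∀ i j, lc i j ∈ Tgrade K s j)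
    (i : Fin m) : homogZ K s (d i) (hRel K s d r lc i) := by
  refine homogZ_add (homogZ_C (hr i)) (homogZ_sum _ fun j hj => ?_)
  simpa [Nat.sub_add_cancel (Finset.mem_range.mp hj).le] using homogZ_monomial (d i - j) (hlc i j)

lemma dehomogenize_mem_span_PsetOf (hl : ∀ i, l i = ∑ j ∈ Finset.range (d i), lc i j)
    {w : (T K s)[X]} (hw : w ∈ TwoSidedIdeal.span (hPset K s d r lc)) :
    dehomogenize w ∈ TwoSidedIdeal.span (PsetOf K s r l) :=
  map_mem_span_range dehomogenize (dehomogenize_hRel hl) hw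

lemma coeff_zero_mem_span_range {w : (T K s)[X]}
    (hw : w ∈ TwoSidedIdeal.span (hPset K s d r lc)) :
    w.coeff 0 ∈ TwoSidedIdeal.span (Set.range r) :=
  map_mem_span_range constantCoeff constantCoeff_hRel hw

lemma projZ_mem_span_hPset (hr : ∀ i, r i ∈ Tgrade K s (d i))
    (hlc : ∀ i j, lc i j ∈ Tgrade K s j) {w : (T K s)[X]}
    (hw : w ∈ TwoSidedIdeal.span (hPset K s d r lc)) (n : ℕ) :
    projZ n w ∈ TwoSidedIdeal.span (hPset K s d r lc) := by
  set I := TwoSidedIdeal.span (hPset K s d r lc)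
  refine span_induction_of_closure_eq_top closure_homogZ_eq_top
    (fun _ ⟨k, hk⟩ => ⟨k, homogZ_neg hk⟩) (p := fun w => ∀ n, projZ n w ∈ I)
    (fun n => by rw [map_zero]; exact I.zero_mem)
    (fun a b ha hb n => by rw [map_add]; exact I.add_mem (ha n) (hb n)) ?_ hw n
  rintro a ⟨u, hu⟩ _ ⟨i, rfl⟩ b ⟨v, hv⟩ n
  rw [projZ_of_homogZ (homogZ_mul (homogZ_mul hu (homogZ_hRel hr hlc i)) hv)]
  split_ifs
  · exact I.mul_mem_right _ _ (I.mul_mem_left _ _ (TwoSidedIdeal.subset_span ⟨i, rfl⟩))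
  · exact I.zero_mem

lemma exists_homogZ_mem_span_hPset_dehomogenize_eq (hr : ∀ i, r i ∈ Tgrade K s (d i))
    (hlc : ∀ i j, lc i j ∈ Tgrade K s j) (hl : ∀ i, l i = ∑ j ∈ Finset.range (d i), lc i j)
    {t : T K s} (ht : t ∈ TwoSidedIdeal.span (PsetOf K s r l)) :
    ∃ n w, w ∈ TwoSidedIdeal.span (hPset K s d r lc) ∧ homogZ K s n w ∧ dehomogenize w = t := by
  obtain ⟨w, hw, rfl⟩ := exists_mem_span_range_map_eq dehomogenize_surjective
    (dehomogenize_hRel hl) ht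
  obtain ⟨N, hN⟩ := exists_sum_projZ_eq w
  refine ⟨N, ∑ n ∈ Finset.range N, X ^ (N - n) * projZ n w, ?_, ?_, ?_⟩
  · exact TwoSidedIdeal.finsetSum_mem _ _ _ fun n _ =>
      TwoSidedIdeal.mul_mem_left _ _ _ (projZ_mem_span_hPset hr hlc hw n)
  · refine homogZ_sum _ fun n hn => ?_
    have h := homogZ_X_pow_mul (N - n) (homogZ_projZ n w)
    rwa [Nat.add_sub_cancel' (Finset.mem_range.mp hn).le] at h
  · simp only [map_sum, map_mul, map_pow, dehomogenize_X, one_pow, one_mul]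
    rw [← map_sum, hN]

lemma exists_homogZ_mem_span_hPset_coeff_zero_eq (hr : ∀ i, r i ∈ Tgrade K s (d i))
    (hlc : ∀ i j, lc i j ∈ Tgrade K s j) {t : T K s}
    (ht : t ∈ TwoSidedIdeal.span (Set.range r)) (n : ℕ) :
    ∃ w ∈ TwoSidedIdeal.span (hPset K s d r lc), homogZ K s n w ∧ w.coeff 0 = proj n t := by
  obtain ⟨w, hw, rfl⟩ := exists_mem_span_range_map_eq constantCoeff_surjective
    constantCoeff_hRel ht
  refine ⟨projZ n w, projZ_mem_span_hPset hr hlc hw n, homogZ_projZ n w, ?_⟩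
  rw [coeff_projZ, if_pos n.zero_le, Nat.sub_zero, constantCoeff_apply]

lemma proj_eq_zero_of_mem_span_range (hr : ∀ i, r i ∈ Tgrade K s (d i)) {k : ℕ}
    (hk : ∀ i, k < d i) {t : T K s} (ht : t ∈ TwoSidedIdeal.span (Set.range r)) :
    proj k t = 0 := by
  refine span_induction_of_closure_eq_top closure_Tgrade_eq_top
    (fun _ ha => neg_mem_iUnion_Tgrade ha) (p := fun t => proj k t = 0) (map_zero _)
    (fun a b ha hb => by rw [map_add, ha, hb, add_zero]) ?_ ht
  rintro a ha _ ⟨i, rfl⟩ b hb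
  obtain ⟨u, hu⟩ := Set.mem_iUnion.mp ha
  obtain ⟨v, hv⟩ := Set.mem_iUnion.mp hb
  exact proj_of_mem_of_ne (Tgrade_mul_mem (Tgrade_mul_mem hu (hr i)) hv) (by have := hk i; omega)

end Presentation

section Equivalence

variable {K : Type*} [Field K] {s m : ℕ} {d : Fin m → ℕ} {r l : Fin m → T K s}
  {lc : Fin m → ℕ → T K s}

variable (K s) in
def IsPBWDeformation (r l : Fin m → T K s) : Prop :=
  ∀ i : ℕ, 1 ≤ i → ∀ x ∈ Tgrade K s i,
    (∃ y ∈ Ffilt K s (i - 1), x + y ∈ TwoSidedIdeal.span (PsetOf K s r l)) →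
      x ∈ TwoSidedIdeal.span (Set.range r)

variable (K s) in
def IsRegularCentralExtension (d : Fin m → ℕ) (r : Fin m → T K s) (lc : Fin m → ℕ → T K s) :
    Prop :=
  ∀ w : (T K s)[X], X * w ∈ TwoSidedIdeal.span (hPset K s d r lc) →
    w ∈ TwoSidedIdeal.span (hPset K s d r lc)

/-- Without generators all `T_i`, `i ≥ 1`, vanish, so there are no relations either; with a
generator `x`, `1 ∈ ⟨P⟩` would put `x` into `⟨R⟩`, which has no component of degree one. -/
lemma one_notMem_span_PsetOf (hd : ∀ i, 2 ≤ d i) (hr : ∀ i, r i ∈ Tgrade K s (d i))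
    (hr0 : ∀ i, r i ≠ 0) (hPBW : IsPBWDeformation K s r l) :
    (1 : T K s) ∉ TwoSidedIdeal.span (PsetOf K s r l) := by
  intro h1
  rcases isEmpty_or_nonempty (Fin s) with hs | ⟨⟨x⟩⟩
  · have hm : IsEmpty (Fin m) := ⟨fun i => hr0 i <| by
      obtain ⟨k, hk⟩ : ∃ k, d i = k + 1 := ⟨d i - 1, by have := hd i; omega⟩
      have hV : V K s = ⊥ := by rw [V, Set.range_eq_empty, Submodule.span_empty]
      simpa [Tgrade, hk, pow_succ, hV] using hr i⟩
    have hbot : TwoSidedIdeal.span (PsetOf K s r l) ≤ ⊥ :=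
      TwoSidedIdeal.span_le.mpr (by simp [PsetOf, Set.range_eq_empty])
    exact one_ne_zero ((TwoSidedIdeal.mem_bot _).mp (hbot h1))
  · have hx : FreeAlgebra.ι K x ∈ Tgrade K s 1 := by
      rw [Tgrade, pow_one]
      exact Submodule.subset_span ⟨x, rfl⟩
    have hxP : FreeAlgebra.ι K x + 0 ∈ TwoSidedIdeal.span (PsetOf K s r l) := by
      simpa using TwoSidedIdeal.mul_mem_left _ (FreeAlgebra.ι K x) 1 h1
    have hxR := hPBW 1 le_rfl _ hx ⟨0, zero_mem _, hxP⟩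
    have h := proj_eq_zero_of_mem_span_range hr (fun i => hd i) hxR
    exact FreeAlgebra.ι_ne_zero x (by rwa [proj_of_mem_self hx] at h)

lemma eq_zero_of_mem_span_PsetOf_of_mem_Tgrade_zero (hd : ∀ i, 2 ≤ d i)
    (hr : ∀ i, r i ∈ Tgrade K s (d i)) (hr0 : ∀ i, r i ≠ 0) (hPBW : IsPBWDeformation K s r l)
    {t : T K s} (ht : t ∈ TwoSidedIdeal.span (PsetOf K s r l)) (h0 : t ∈ Tgrade K s 0) :
    t = 0 := by
  rw [Tgrade, pow_zero] at h0
  obtain ⟨c, rfl⟩ := Submodule.mem_one.mp h0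
  by_contra hc
  refine one_notMem_span_PsetOf hd hr hr0 hPBW ?_
  have hc : c ≠ 0 := fun h => hc (by rw [h, map_zero])
  simpa [← map_mul, inv_mul_cancel₀ hc] using
    TwoSidedIdeal.mul_mem_left _ (algebraMap K (T K s) c⁻¹) _ ht

lemma exists_eq_X_mul_add_of_X_pow_mul_mem (hr : ∀ i, r i ∈ Tgrade K s (d i))
    (hlc : ∀ i j, lc i j ∈ Tgrade K s j) (hl : ∀ i, l i = ∑ j ∈ Finset.range (d i), lc i j)
    (hPBW : IsPBWDeformation K s r l) {n k : ℕ} {w : (T K s)[X]} (hw : homogZ K s (n + 1) w)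
    (hXw : X ^ k * w ∈ TwoSidedIdeal.span (hPset K s d r lc)) :
    ∃ u v, homogZ K s n u ∧ v ∈ TwoSidedIdeal.span (hPset K s d r lc) ∧ w = X * u + v := by
  have hc : w.coeff 0 ∈ Tgrade K s (n + 1) := by simpa using hw.1 0 n.succ.zero_le
  have hwP := dehomogenize_mem_span_PsetOf hl hXw
  rw [map_mul, map_pow, dehomogenize_X, one_pow, one_mul] at hwP
  have hsplit : dehomogenize w = w.coeff 0 + ∑ j ∈ Finset.range (n + 1), w.coeff (j + 1) := by
    rw [dehomogenize_of_homogZ hw, Finset.sum_range_succ', add_comm]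
  have hlower : ∑ j ∈ Finset.range (n + 1), w.coeff (j + 1) ∈ Ffilt K s n :=
    Submodule.sum_mem _ fun j hj => by
      have hj := Finset.mem_range.mp hj
      exact Tgrade_le_Ffilt (by omega) (hw.1 (j + 1) (by omega))
  have hcR : w.coeff 0 ∈ TwoSidedIdeal.span (Set.range r) :=
    hPBW (n + 1) (by omega) _ hc ⟨_, hlower, hsplit ▸ hwP⟩
  obtain ⟨v, hvI, hv, hv0⟩ := exists_homogZ_mem_span_hPset_coeff_zero_eq hr hlc hcR (n + 1)
  rw [proj_of_mem_self hc] at hv0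
  refine ⟨(w - v).divX, v, homogZ_divX (homogZ_sub hw hv), hvI, ?_⟩
  have h := X_mul_divX_add (w - v)
  rw [coeff_sub, hv0, sub_self, map_zero, add_zero] at h
  rw [h, sub_add_cancel]

lemma mem_span_hPset_of_X_pow_mul_mem (hd : ∀ i, 2 ≤ d i) (hr : ∀ i, r i ∈ Tgrade K s (d i))
    (hr0 : ∀ i, r i ≠ 0) (hlc : ∀ i j, lc i j ∈ Tgrade K s j)
    (hl : ∀ i, l i = ∑ j ∈ Finset.range (d i), lc i j) (hPBW : IsPBWDeformation K s r l)
    (n : ℕ) {w : (T K s)[X]} (hw : homogZ K s n w) (k : ℕ)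
    (hXw : X ^ k * w ∈ TwoSidedIdeal.span (hPset K s d r lc)) :
    w ∈ TwoSidedIdeal.span (hPset K s d r lc) := by
  set I := TwoSidedIdeal.span (hPset K s d r lc)
  induction n generalizing w k with
  | zero =>
    have hw0 := eq_C_of_homogZ_zero hw
    have hP := dehomogenize_mem_span_PsetOf hl hXw
    rw [map_mul, map_pow, dehomogenize_X, one_pow, one_mul, hw0, dehomogenize_C] at hP
    rw [hw0, eq_zero_of_mem_span_PsetOf_of_mem_Tgrade_zero hd hr hr0 hPBW hP
      (by simpa using hw.1 0 le_rfl), map_zero]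
    exact I.zero_mem
  | succ n ih =>
    obtain ⟨u, v, hu, hv, rfl⟩ := exists_eq_X_mul_add_of_X_pow_mul_mem hr hlc hl hPBW hw hXw
    have hXu : X ^ (k + 1) * u ∈ I := by
      simpa [mul_add, pow_succ, mul_assoc] using I.sub_mem hXw (I.mul_mem_left (X ^ k) _ hv)
    exact I.add_mem (I.mul_mem_left _ _ (ih hu (k + 1) hXu)) hv

lemma isRegularCentralExtension_of_isPBWDeformation (hd : ∀ i, 2 ≤ d i)
    (hr : ∀ i, r i ∈ Tgrade K s (d i)) (hr0 : ∀ i, r i ≠ 0)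
    (hlc : ∀ i j, lc i j ∈ Tgrade K s j) (hl : ∀ i, l i = ∑ j ∈ Finset.range (d i), lc i j)
    (hPBW : IsPBWDeformation K s r l) : IsRegularCentralExtension K s d r lc := by
  intro w hXw
  obtain ⟨N, hN⟩ := exists_sum_projZ_eq w
  rw [← hN]
  refine TwoSidedIdeal.finsetSum_mem _ _ _ fun n _ =>
    mem_span_hPset_of_X_pow_mul_mem hd hr hr0 hlc hl hPBW n (homogZ_projZ n w) 1 ?_
  rw [pow_one, ← projZ_X_mul]
  exact projZ_mem_span_hPset hr hlc hXw (n + 1)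

lemma mem_of_X_pow_mul_mem (hreg : IsRegularCentralExtension K s d r lc) (k : ℕ)
    {u : (T K s)[X]} (hu : X ^ k * u ∈ TwoSidedIdeal.span (hPset K s d r lc)) :
    u ∈ TwoSidedIdeal.span (hPset K s d r lc) := by
  induction k generalizing u with
  | zero => simpa using hu
  | succ k ih =>
    rw [pow_succ, mul_assoc] at hu
    exact hreg u (ih hu)

lemma isPBWDeformation_of_isRegularCentralExtension (hr : ∀ i, r i ∈ Tgrade K s (d i))
    (hlc : ∀ i j, lc i j ∈ Tgrade K s j) (hl : ∀ i, l i = ∑ j ∈ Finset.range (d i), lc i j)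
    (hreg : IsRegularCentralExtension K s d r lc) : IsPBWDeformation K s r l := by
  rintro i hi x hx ⟨y, hy, hxy⟩
  obtain ⟨n, w, hwI, hw, hwxy⟩ := exists_homogZ_mem_span_hPset_dehomogenize_eq hr hlc hl hxy
  have hproj : ∀ k, i ≤ k → proj k (dehomogenize w) = if i = k then x else 0 := fun k hk => by
    rw [hwxy, map_add, proj_of_mem hx, proj_eq_zero_of_mem_Ffilt hy (by omega), add_zero]
  have hlow : ∀ j < n - i, w.coeff j = 0 := fun j hj => by
    have h := hproj (n - j) (by omega)
    rwa [proj_dehomogenize_of_homogZ hw, if_pos (Nat.sub_le n j), Nat.sub_sub_self (by omega),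
      if_neg (by omega)] at h
  obtain ⟨w', rfl⟩ := X_pow_dvd_iff.mpr hlow
  have hx' := hproj i le_rfl
  rw [proj_dehomogenize_of_homogZ hw, if_pos (rfl : i = i)] at hx'
  split_ifs at hx' with hin
  · rw [← hx', coeff_X_pow_mul', if_pos le_rfl, Nat.sub_self]
    exact coeff_zero_mem_span_range (mem_of_X_pow_mul_mem hreg _ hwI)
  · rw [← hx']
    exact TwoSidedIdeal.zero_mem _

end Equivalence

theorem pbw_deformation_iff_regular_central_extension (K : Type*) [Field K] (s : ℕ)
    {m : ℕ} (d : Fin m → ℕ) (r l : Fin m → T K s) (lc : Fin m → ℕ → T K s)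
    -- each relation `r_i` of `A` is homogeneous of degree `d_i ≥ 2` and nonzero
    (hd : ∀ i, 2 ≤ d i)
    (hr : ∀ i, r i ∈ Tgrade K s (d i))
    (hr0 : ∀ i, r i ≠ 0)
    -- `l_i = Σ_{j < d_i} l_{i,j}` with `l_{i,j}` homogeneous of degree `j`, so `deg l_i < d_i`
    (hlc : ∀ i j, lc i j ∈ Tgrade K s j)
    (hl : ∀ i, l i = ∑ j ∈ Finset.range (d i), lc i j) :
    -- `U` is a PBW-deformation of `A`: the canonical surjection `Φ : A → gr U` is an
    -- isomorphism, i.e. `Φ` is injective in every degree `i ≥ 1`: whenever `x ∈ T_i` is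
    -- homogeneous and `x + y ∈ ⟨P⟩` for some `y ∈ F^{i-1}T`, then `x ∈ ⟨R⟩`
    (∀ i : ℕ, 1 ≤ i → ∀ x ∈ Tgrade K s i,
        (∃ y ∈ Ffilt K s (i - 1), x + y ∈ TwoSidedIdeal.span (PsetOf K s r l)) →
        x ∈ TwoSidedIdeal.span (Set.range r))
    ↔
    -- `D` is a regular central extension: the image of `z` in `D = T[z]/⟨h(P)⟩` is not a
    -- zero divisor (`z` is central in `T[z]`)
    (∀ w : Polynomial (T K s),
        X * w ∈ TwoSidedIdeal.span (hPset K s d r lc) →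
        w ∈ TwoSidedIdeal.span (hPset K s d r lc)) := by
  exact ⟨isRegularCentralExtension_of_isPBWDeformation hd hr hr0 hlc hl,
    isPBWDeformation_of_isRegularCentralExtension hr hlc hl⟩

end PBWPaper
end
end

section
/- In the algebra A = K⟨w, x, y, z⟩/⟨yz, zx − xz, zw⟩, for every n ≥ 0 the image of x^n z is nonzero, while the image of y x^n z is zero. -/
open Polynomial

noncomputable section

namespace PBWPaper

variable (K : Type*) [Field K] (s : ℕ)

theorem example_infinite_complexity (K : Type*) [Field K] :
    let w : T K 4 := FreeAlgebra.ι K 0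
    let x : T K 4 := FreeAlgebra.ι K 1
    let y : T K 4 := FreeAlgebra.ι K 2
    let z : T K 4 := FreeAlgebra.ι K 3
    -- `A = K⟨w,x,y,z⟩/⟨yz, zx − xz, zw⟩`
    let I : TwoSidedIdeal (T K 4) := TwoSidedIdeal.span {y * z, z * x - x * z, z * w}
    ∀ n : ℕ,
      -- the image of `x^n z` in `A` is nonzero
      I.ringCon.mk' (x ^ n * z) ≠ 0 ∧
      -- the image of `y x^n z` in `A` is zero
      I.ringCon.mk' (y * (x ^ n * z)) = 0 := by
  intro w x y z I n
  -- membership facts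
  have hyz : y * z ∈ I := TwoSidedIdeal.subset_span (by simp)
  have hzx : z * x - x * z ∈ I := TwoSidedIdeal.subset_span (by simp)
  have hcomm : ∀ m : ℕ, x ^ m * z - z * x ^ m ∈ I := by
    intro m
    induction m with
    | zero => simp only [pow_zero, one_mul, mul_one, sub_self]; exact I.zero_mem
    | succ m ih =>
        have heq : x ^ (m + 1) * z - z * x ^ (m + 1) =
            x * (x ^ m * z - z * x ^ m) + (-(z * x - x * z)) * x ^ m := by
          simp only [pow_succ']
          noncomm_ring
        rw [heq]
        exact I.add_mem (I.mul_mem_left _ _ ih)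
          (I.mul_mem_right _ _ (I.neg_mem hzx))
  have hmem : y * (x ^ n * z) ∈ I := by
    have heq : y * (x ^ n * z) =
        y * (x ^ n * z - z * x ^ n) + (y * z) * x ^ n := by noncomm_ring
    rw [heq]
    exact I.add_mem (I.mul_mem_left _ _ (hcomm n)) (I.mul_mem_right _ _ hyz)
  -- the algebra map to `K[X₀,X₁]` killing `w, y`
  set φ : T K 4 →ₐ[K] MvPolynomial (Fin 2) K :=
    FreeAlgebra.lift K (fun i : Fin 4 =>
      if i = 1 then MvPolynomial.X 0 else if i = 3 then MvPolynomial.X 1 else 0) with hφ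
  have φw : φ w = 0 := by simp [hφ, w, FreeAlgebra.lift_ι_apply]
  have φx : φ x = MvPolynomial.X 0 := by simp [hφ, x, FreeAlgebra.lift_ι_apply]
  have φy : φ y = 0 := by simp [hφ, y, FreeAlgebra.lift_ι_apply]
  have φz : φ z = MvPolynomial.X 1 := by simp [hφ, z, FreeAlgebra.lift_ι_apply]
  have hker : ∀ a ∈ I, φ a = 0 := by
    intro a ha
    have : a ∈ TwoSidedIdeal.ker (φ : T K 4 →+* MvPolynomial (Fin 2) K) := by
      refine TwoSidedIdeal.mem_span_iff.mp ha _ ?_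
      intro b hb
      rcases hb with hb | hb | hb <;> subst hb <;>
        simp [TwoSidedIdeal.mem_ker, map_mul, map_sub, φw, φx, φy, φz, mul_comm]
    simpa [TwoSidedIdeal.mem_ker] using this
  have hnot : x ^ n * z ∉ I := by
    intro h
    have h0 := hker _ h
    rw [map_mul, map_pow, φx, φz] at h0
    exact (mul_ne_zero (pow_ne_zero _ (MvPolynomial.X_ne_zero 0))
      (MvPolynomial.X_ne_zero 1)) h0
  constructor
  · intro h
    apply hnot
    have h' : I.ringCon.mk' (x ^ n * z) = I.ringCon.mk' 0 := by
      simpa using h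
    exact (TwoSidedIdeal.mem_iff _ _).mpr (I.ringCon.eq.mp h')
  · have : I.ringCon (y * (x ^ n * z)) 0 := (TwoSidedIdeal.mem_iff _ _).mp hmem
    simpa using I.ringCon.eq.mpr this
end PBWPaper
end
end
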